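/- Let E be a real inner product space and f : E → ℝ a convex differentiable function whose gradient is affine Lipschitz with constants L ≥ 0 and c ≥ 0, i.e., ‖∇f(w₂) − ∇f(w₁)‖ ≤ L‖w₂ − w₁‖ + c for all w₁, w₂ ∈ E. Then for all w, w⋆ ∈ E: ‖∇f(w)‖² ≤ 4(L+1)·(f(w) − f(w⋆) − ⟪∇f(w⋆), w − w⋆⟫) + 2(L+1)·c² + 2‖∇f(w⋆)‖². -/

import Mathlib

/-!
Subtracting the tangent plane at `wstar` leaves the convex function `y ↦ f y - ⟪g wstar, y⟫`,
which is minimised at `wstar` and whose gradient `g y - g wstar` is affine Lipschitz with the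
same constants. A gradient step of length `1 / (L + 1)` from `w` decreases it, by the descent
lemma and AM–GM, by at least `‖g w - g wstar‖² / (2 (L + 1)) - c² / 2`, and it cannot drop below
its value at `wstar`. The remaining factor `2` comes from `‖a + b‖² ≤ 2 ‖a‖² + 2 ‖b‖²`.
-/

open RealInnerProductSpace AffineMap Set

def AffineLipschitzWith {E F : Type*} [SeminormedAddCommGroup E] [SeminormedAddCommGroup F]
    (L c : ℝ) (g : E → F) : Prop :=
  ∀ w₁ w₂ : E, ‖g w₂ - g w₁‖ ≤ L * ‖w₂ - w₁‖ + c

theorem image_one_le_of_hasDerivAt_le_affine {ψ ψ' : ℝ → ℝ} {a b : ℝ}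
    (hψ : ∀ t ∈ Icc (0 : ℝ) 1, HasDerivAt ψ (ψ' t) t)
    (hψ' : ∀ t ∈ Ioo (0 : ℝ) 1, ψ' t ≤ ψ' 0 + a * t + b) :
    ψ 1 ≤ ψ 0 + ψ' 0 + a / 2 + b := by
  let χ : ℝ → ℝ := fun t ↦ ψ 0 + ψ' 0 * t + a / 2 * t ^ 2 + b * t - ψ t
  have hχ : ∀ t ∈ Icc (0 : ℝ) 1, HasDerivAt χ (ψ' 0 + a * t + b - ψ' t) t := fun t ht ↦ by
    have hχ' := (((((hasDerivAt_id' t).const_mul (ψ' 0)).const_add (ψ 0)).add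
      ((hasDerivAt_pow 2 t).const_mul (a / 2))).add ((hasDerivAt_id' t).const_mul b)).sub (hψ t ht)
    exact hχ'.congr_deriv (by norm_num; ring)
  have hmono : MonotoneOn χ (Icc 0 1) := by
    refine monotoneOn_of_hasDerivWithinAt_nonneg (f' := fun t ↦ ψ' 0 + a * t + b - ψ' t)
      (convex_Icc 0 1)
      (fun t ht ↦ (hχ t ht).continuousAt.continuousWithinAt) (fun t ht ↦ ?_) (fun t ht ↦ ?_)
    · exact (hχ t (interior_subset ht)).hasDerivWithinAt
    · rw [interior_Icc] at ht
      linarith [hψ' t ht]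
  have hχ01 := hmono (left_mem_Icc.2 zero_le_one) (right_mem_Icc.2 zero_le_one) zero_le_one
  simp only [χ] at hχ01
  linarith

section

variable {E : Type*} [NormedAddCommGroup E] [InnerProductSpace ℝ E] [CompleteSpace E]
  {f : E → ℝ} {f' x y : E}

theorem HasGradientAt.hasDerivAt_comp_lineMap {t : ℝ} (hf : HasGradientAt f f' (lineMap x y t)) :
    HasDerivAt (fun s : ℝ ↦ f (lineMap x y s)) ⟪f', y - x⟫ t := by
  have h := hf.hasFDerivAt.comp_hasDerivAt t hasDerivAt_lineMap
  rw [InnerProductSpace.toDual_apply_apply] at h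
  exact h

theorem ConvexOn.add_inner_sub_le_of_hasGradientAt {s : Set E} (hf : ConvexOn ℝ s f)
    (hx : x ∈ s) (hy : y ∈ s) (hgrad : HasGradientAt f f' x) :
    f x + ⟪f', y - x⟫ ≤ f y := by
  have hline : ConvexOn ℝ (lineMap x y ⁻¹' s) (fun t : ℝ ↦ f (lineMap x y t)) :=
    hf.comp_affineMap (lineMap x y)
  have h := hline.le_slope_of_hasDerivAt (x := 0) (y := 1) (by simpa using hx) (by simpa using hy)
    zero_lt_one (HasGradientAt.hasDerivAt_comp_lineMap (by simpa using hgrad))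
  simp only [slope_def_field, lineMap_apply_one, lineMap_apply_zero, sub_zero, div_one] at h
  linarith

theorem AffineLipschitzWith.le_add_inner_sub_add {g : E → E} {L c : ℝ}
    (hg : AffineLipschitzWith L c g) (hgrad : ∀ w, HasGradientAt f (g w) w) (x y : E) :
    f y ≤ f x + ⟪g x, y - x⟫ + L / 2 * ‖y - x‖ ^ 2 + c * ‖y - x‖ := by
  have key := image_one_le_of_hasDerivAt_le_affine (ψ := fun t ↦ f (lineMap x y t))
    (ψ' := fun t ↦ ⟪g (lineMap x y t), y - x⟫) (a := L * ‖y - x‖ ^ 2) (b := c * ‖y - x‖)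
    (fun t _ ↦ (hgrad _).hasDerivAt_comp_lineMap) (fun t ht ↦ ?_)
  · simp only [lineMap_apply_zero, lineMap_apply_one] at key
    linarith
  · have hdist : ‖lineMap x y t - x‖ = t * ‖y - x‖ := by
      rw [lineMap_apply_module', add_sub_cancel_right, norm_smul, Real.norm_of_nonneg ht.1.le]
    calc ⟪g (lineMap x y t), y - x⟫
        = ⟪g x, y - x⟫ + ⟪g (lineMap x y t) - g x, y - x⟫ := by rw [inner_sub_left]; ring
      _ ≤ ⟪g x, y - x⟫ + (L * (t * ‖y - x‖) + c) * ‖y - x‖ := by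
          gcongr
          exact (real_inner_le_norm _ _).trans
            (mul_le_mul_of_nonneg_right (hdist ▸ hg _ _) (norm_nonneg _))
      _ = _ := by rw [lineMap_apply_zero]; ring

theorem mul_norm_gradient_sub_sq_sub_le_bregman {g : E → E} {L c t : ℝ} (hf : ConvexOn ℝ univ f)
    (hgrad : ∀ w, HasGradientAt f (g w) w) (hg : AffineLipschitzWith L c g) (ht : 0 ≤ t)
    (w wstar : E) :
    t * ‖g w - g wstar‖ ^ 2 - L / 2 * t ^ 2 * ‖g w - g wstar‖ ^ 2 - c * t * ‖g w - g wstar‖ ≤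
      f w - f wstar - ⟪g wstar, w - wstar⟫ := by
  set G := g w - g wstar
  set y := w - t • G
  have hdescent := hg.le_add_inner_sub_add hgrad w y
  have hsupport := hf.add_inner_sub_le_of_hasGradientAt (mem_univ wstar) (mem_univ y) (hgrad wstar)
  have hyw : y - w = -(t • G) := by simp [y]
  have hyw' : y - wstar = (w - wstar) - t • G := by simp [y]; abel
  rw [hyw, norm_neg, norm_smul, Real.norm_of_nonneg ht, inner_neg_right, real_inner_smul_right]
    at hdescent
  rw [hyw', inner_sub_right, real_inner_smul_right] at hsupport
  have hG : ⟪g w, G⟫ - ⟪g wstar, G⟫ = ‖G‖ ^ 2 := by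
    rw [← inner_sub_left, real_inner_self_eq_norm_sq]
  linear_combination hdescent + hsupport - t * hG

theorem norm_gradient_sub_sq_le_bregman {g : E → E} {L c : ℝ} (hf : ConvexOn ℝ univ f)
    (hgrad : ∀ w, HasGradientAt f (g w) w) (hg : AffineLipschitzWith L c g) (hL : 0 ≤ L)
    (w wstar : E) :
    ‖g w - g wstar‖ ^ 2 ≤
      2 * (L + 1) * (f w - f wstar - ⟪g wstar, w - wstar⟫) + (L + 1) * c ^ 2 := by
  set N := ‖g w - g wstar‖
  have hL1 : 0 < L + 1 := by linarith
  have h := mul_norm_gradient_sub_sq_sub_le_bregman hf hgrad hg (inv_nonneg.2 hL1.le) w wstar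
  have hamgm : 2 * (L + 1) * c * N ≤ N ^ 2 + (L + 1) ^ 2 * c ^ 2 := by
    nlinarith [sq_nonneg (N - (L + 1) * c)]
  have h' : (L + 2) * N ^ 2 - 2 * (L + 1) * c * N ≤
      2 * (L + 1) ^ 2 * (f w - f wstar - ⟪g wstar, w - wstar⟫) := by
    have hmul := mul_le_mul_of_nonneg_left h (by positivity : 0 ≤ 2 * (L + 1) ^ 2)
    field_simp at hmul
    linarith
  have hscaled : (L + 1) * N ^ 2 ≤
      (L + 1) * (2 * (L + 1) * (f w - f wstar - ⟪g wstar, w - wstar⟫) + (L + 1) * c ^ 2) := by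
    linarith
  exact le_of_mul_le_mul_left hscaled hL1

end

theorem gradient_norm_sq_le_bregman_gap_general
    {E : Type*} [NormedAddCommGroup E] [InnerProductSpace ℝ E] [CompleteSpace E]
    (f : E → ℝ) (g : E → E) (L c : ℝ) (hL : 0 ≤ L)
    (hconv : ConvexOn ℝ Set.univ f)
    (hgrad : ∀ w : E, HasGradientAt f (g w) w)
    (haff : ∀ w₁ w₂ : E, ‖g w₂ - g w₁‖ ≤ L * ‖w₂ - w₁‖ + c) :
    ∀ w wstar : E,
      ‖g w‖ ^ 2 ≤
        4 * (L + 1) * (f w - f wstar - ⟪g wstar, w - wstar⟫) +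
          2 * (L + 1) * c ^ 2 + 2 * ‖g wstar‖ ^ 2 := by
  intro w wstar
  have hdiff := norm_gradient_sub_sq_le_bregman hconv hgrad haff hL w wstar
  calc ‖g w‖ ^ 2 = ‖(g w - g wstar) + g wstar‖ ^ 2 := by rw [sub_add_cancel]
    _ ≤ (‖g w - g wstar‖ + ‖g wstar‖) ^ 2 := by gcongr; exact norm_add_le _ _
    _ ≤ 2 * (‖g w - g wstar‖ ^ 2 + ‖g wstar‖ ^ 2) := add_sq_le
    _ ≤ _ := by linarith

/-- Deterministic core of Lemma 4: for a convex differentiable function whose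
gradient is affine Lipschitz with constants `(L, c)`, the squared gradient norm is
bounded by the Bregman-type gap at a reference point plus `2(L+1)c²` plus twice
the squared gradient norm at the reference point. -/
theorem gradient_norm_sq_le_bregman_gap
    {E : Type*} [NormedAddCommGroup E] [InnerProductSpace ℝ E] [CompleteSpace E]
    (f : E → ℝ) (g : E → E) (L c : ℝ) (hL : 0 ≤ L) (hc : 0 ≤ c)
    (hconv : ConvexOn ℝ Set.univ f)
    (hgrad : ∀ w : E, HasGradientAt f (g w) w)
    (haff : ∀ w₁ w₂ : E, ‖g w₂ - g w₁‖ ≤ L * ‖w₂ - w₁‖ + c) :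
    ∀ w wstar : E,
      ‖g w‖ ^ 2 ≤
        4 * (L + 1) * (f w - f wstar - ⟪g wstar, w - wstar⟫) +
          2 * (L + 1) * c ^ 2 + 2 * ‖g wstar‖ ^ 2 :=
  gradient_norm_sq_le_bregman_gap_general f g L c hL hconv hgrad haff
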